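/- Let X be a Banach space whose dual X* is C-convex (i.e., C(n, X*) → ∞ as n → ∞, where C(n,Y) = inf over n-tuples of vectors of norm ≥ 1 of the max over sign choices of the norm of the signed sum). Let (X_k)_{k≥1} be an absolutely representing system of subspaces in X, let I_1, I_2, ... be subsets of ℕ, and m ∈ ℕ such that each natural number belongs to at most m of the sets I_j. Then there exists j such that the system (X_k)_{k∉I_j} is an absolutely representing system of subspaces in X. -/
import Mathlib


open Filter Finset

/-- The `C`-convexity constants `C(n, Y)`: the infimum over `n`-tuples of vectors of norm
`≥ 1` of the maximum over sign choices of the norm of the signed sum. -/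
noncomputable def Cconst (Y : Type*) [NormedAddCommGroup Y] [NormedSpace ℝ Y]
    (n : ℕ) : ℝ :=
  sInf {M : ℝ | ∃ y : Fin n → Y, (∀ k, 1 ≤ ‖y k‖) ∧
    M = ⨆ α : Fin n → Bool, ‖∑ k : Fin n, (if α k then (1:ℝ) else -1) • y k‖}

/-- `Y` is `C`-convex iff `C(n, Y) → ∞`. -/
def IsCConvex (Y : Type*) [NormedAddCommGroup Y] [NormedSpace ℝ Y] : Prop :=
  Tendsto (fun n => Cconst Y n) atTop atTop

/-- `S = (X_k)` is an absolutely representing system of subspaces. -/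
def IsARSS {E : Type*} [NormedAddCommGroup E] [NormedSpace ℝ E]
    (X : ℕ → Submodule ℝ E) : Prop :=
  ∀ x : E, ∃ f : ℕ → E, (∀ k, f k ∈ X k) ∧ (Summable fun k => ‖f k‖) ∧
    Tendsto (fun n => ∑ k ∈ Finset.range n, f k) atTop (nhds x)

section Aux

variable {E : Type*} [NormedAddCommGroup E] [NormedSpace ℝ E]

/-- Finite sums `∑ f k` with `f k ∈ X k`, `f` vanishing on `J`, of total cost `≤ c`. -/
def FinRep (X : ℕ → Submodule ℝ E) (J : Set ℕ) (c : ℝ) : Set E :=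
  {y | ∃ s : Finset ℕ, ∃ f : ℕ → E, (∀ k, f k ∈ X k) ∧ (∀ k ∈ J, f k = 0) ∧
      (∀ k ∉ s, f k = 0) ∧ ∑ k ∈ s, ‖f k‖ ≤ c ∧ y = ∑ k ∈ s, f k}

lemma FinRep.zero_mem {X : ℕ → Submodule ℝ E} {J : Set ℕ} {c : ℝ} (hc : 0 ≤ c) :
    (0 : E) ∈ FinRep X J c :=
  ⟨∅, fun _ => 0, fun k => (X k).zero_mem, fun _ _ => rfl, fun _ _ => rfl, by simpa, by simp⟩

lemma FinRep.neg_mem {X : ℕ → Submodule ℝ E} {J : Set ℕ} {c : ℝ} {y : E}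
    (h : y ∈ FinRep X J c) : -y ∈ FinRep X J c := by
  obtain ⟨s, f, h1, h2, h3, h4, h5⟩ := h
  exact ⟨s, fun k => -f k, fun k => (X k).neg_mem (h1 k), fun k hk => by simp [h2 k hk],
    fun k hk => by simp [h3 k hk], by simpa using h4, by simp [h5]⟩

lemma FinRep.smul_mem {X : ℕ → Submodule ℝ E} {J : Set ℕ} {c t : ℝ} {y : E} (ht : 0 ≤ t)
    (h : y ∈ FinRep X J c) : t • y ∈ FinRep X J (t * c) := by
  obtain ⟨s, f, h1, h2, h3, h4, h5⟩ := h
  refine ⟨s, fun k => t • f k, fun k => (X k).smul_mem _ (h1 k),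
    fun k hk => by simp [h2 k hk], fun k hk => by simp [h3 k hk], ?_, ?_⟩
  · calc ∑ k ∈ s, ‖t • f k‖ = t * ∑ k ∈ s, ‖f k‖ := by
          rw [Finset.mul_sum]; exact Finset.sum_congr rfl fun k _ => by
            rw [norm_smul, Real.norm_eq_abs, abs_of_nonneg ht]
      _ ≤ t * c := by exact mul_le_mul_of_nonneg_left h4 ht
  · rw [h5, Finset.smul_sum]

lemma FinRep.convex (X : ℕ → Submodule ℝ E) (J : Set ℕ) (c : ℝ) :
    Convex ℝ (FinRep X J c) := by
  rintro y1 ⟨s1, f1, h11, h12, h13, h14, h15⟩ y2 ⟨s2, f2, h21, h22, h23, h24, h25⟩ a b ha hb hab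
  refine ⟨s1 ∪ s2, fun k => a • f1 k + b • f2 k,
    fun k => (X k).add_mem ((X k).smul_mem _ (h11 k)) ((X k).smul_mem _ (h21 k)),
    fun k hk => by simp [h12 k hk, h22 k hk],
    fun k hk => by
      simp [h13 k fun h => hk (Finset.mem_union_left _ h),
        h23 k fun h => hk (Finset.mem_union_right _ h)], ?_, ?_⟩
  · have e1 : ∑ k ∈ s1, ‖f1 k‖ = ∑ k ∈ s1 ∪ s2, ‖f1 k‖ :=
      Finset.sum_subset Finset.subset_union_left
        (fun k _ hk => by rw [h13 k hk, norm_zero])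
    have e2 : ∑ k ∈ s2, ‖f2 k‖ = ∑ k ∈ s1 ∪ s2, ‖f2 k‖ :=
      Finset.sum_subset Finset.subset_union_right
        (fun k _ hk => by rw [h23 k hk, norm_zero])
    calc ∑ k ∈ s1 ∪ s2, ‖a • f1 k + b • f2 k‖
        ≤ ∑ k ∈ s1 ∪ s2, (a * ‖f1 k‖ + b * ‖f2 k‖) := by
          refine Finset.sum_le_sum fun k _ => ?_
          calc ‖a • f1 k + b • f2 k‖ ≤ ‖a • f1 k‖ + ‖b • f2 k‖ := norm_add_le _ _
            _ = a * ‖f1 k‖ + b * ‖f2 k‖ := by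
                rw [norm_smul, norm_smul, Real.norm_eq_abs, Real.norm_eq_abs,
                  abs_of_nonneg ha, abs_of_nonneg hb]
      _ = a * ∑ k ∈ s1, ‖f1 k‖ + b * ∑ k ∈ s2, ‖f2 k‖ := by
          rw [Finset.sum_add_distrib, ← Finset.mul_sum, ← Finset.mul_sum, e1, e2]
      _ ≤ a * c + b * c := by
          exact add_le_add (mul_le_mul_of_nonneg_left h14 ha) (mul_le_mul_of_nonneg_left h24 hb)
      _ = c := by rw [← add_mul, hab, one_mul]
  · have e1 : ∑ k ∈ s1, f1 k = ∑ k ∈ s1 ∪ s2, f1 k :=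
      Finset.sum_subset Finset.subset_union_left (fun k _ hk => h13 k hk)
    have e2 : ∑ k ∈ s2, f2 k = ∑ k ∈ s1 ∪ s2, f2 k :=
      Finset.sum_subset Finset.subset_union_right (fun k _ hk => h23 k hk)
    rw [h15, h25, e1, e2, Finset.sum_add_distrib, Finset.smul_sum, Finset.smul_sum]

lemma FinRep.single_mem {X : ℕ → Submodule ℝ E} {J : Set ℕ} {c : ℝ} {k : ℕ} {v : E}
    (hk : k ∉ J) (hv : v ∈ X k) (hc : ‖v‖ ≤ c) : v ∈ FinRep X J c := by
  classical
  refine ⟨{k}, fun k' => if k' = k then v else 0, ?_, ?_, ?_, ?_, ?_⟩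
  · intro k'; by_cases h : k' = k
    · subst h; simpa using hv
    · simp [h, (X k').zero_mem]
  · intro k' hk'
    have hne : k' ≠ k := fun h => hk (h ▸ hk')
    simp [hne]
  · intro k' hk'
    have hne : k' ≠ k := by simpa using hk'
    simp [hne]
  · simpa using hc
  · simp

lemma FinRep.smul_mem_closure {X : ℕ → Submodule ℝ E} {J : Set ℕ} {c t : ℝ} {y : E} (ht : 0 ≤ t)
    (h : y ∈ closure (FinRep X J c)) : t • y ∈ closure (FinRep X J (t * c)) := by
  have h1 : t • y ∈ (fun z : E => t • z) '' closure (FinRep X J c) := ⟨y, h, rfl⟩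
  have h2 : (fun z : E => t • z) '' closure (FinRep X J c) ⊆
      closure ((fun z : E => t • z) '' FinRep X J c) :=
    image_closure_subset_closure_image (continuous_const_smul t)
  refine closure_mono ?_ (h2 h1)
  rintro _ ⟨z, hz, rfl⟩
  exact FinRep.smul_mem ht hz

lemma FinRep.neg_mem_closure {X : ℕ → Submodule ℝ E} {J : Set ℕ} {c : ℝ} {y : E}
    (h : y ∈ closure (FinRep X J c)) : -y ∈ closure (FinRep X J c) := by
  have h1 : -y ∈ (fun z : E => -z) '' closure (FinRep X J c) := ⟨y, h, rfl⟩
  have h2 : (fun z : E => -z) '' closure (FinRep X J c) ⊆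
      closure ((fun z : E => -z) '' FinRep X J c) :=
    image_closure_subset_closure_image continuous_neg
  refine closure_mono ?_ (h2 h1)
  rintro _ ⟨z, hz, rfl⟩
  exact FinRep.neg_mem hz


-- Baire: from IsARSS, a ball around 0 lies in the closure of cost-1 finite representations.
lemma exists_ball_subset_closure_finRep [CompleteSpace E] (X : ℕ → Submodule ℝ E)
    (hS : ∀ x : E, ∃ f : ℕ → E, (∀ k, f k ∈ X k) ∧ (Summable fun k => ‖f k‖) ∧
      Tendsto (fun n => ∑ k ∈ Finset.range n, f k) atTop (nhds x)) :
    ∃ δ : ℝ, 0 < δ ∧ Metric.ball (0 : E) δ ⊆ closure (FinRep X ∅ 1) := by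
  classical
  have hNE : Nonempty E := ⟨0⟩
  set F : ℕ → Set E := fun n => closure (FinRep X ∅ (n + 1 : ℝ)) with hF
  have hcover : (⋃ n, F n) = Set.univ := by
    refine Set.eq_univ_of_forall fun x => Set.mem_iUnion.2 ?_
    obtain ⟨f, hf1, hf2, hf3⟩ := hS x
    set S : ℝ := ∑' k, ‖f k‖ with hSdef
    refine ⟨⌈S⌉₊, ?_⟩
    refine mem_closure_of_tendsto hf3 (Filter.Eventually.of_forall fun N => ?_)
    refine ⟨Finset.range N, fun k => if k ∈ Finset.range N then f k else 0, ?_, ?_, ?_, ?_, ?_⟩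
    · intro k; by_cases h : k ∈ Finset.range N
      · simpa [h] using hf1 k
      · simp [h, (X k).zero_mem]
    · intro k hk; exact absurd hk (Set.notMem_empty k)
    · intro k hk; simp [hk]
    · calc ∑ k ∈ Finset.range N, ‖if k ∈ Finset.range N then f k else 0‖
          = ∑ k ∈ Finset.range N, ‖f k‖ :=
            Finset.sum_congr rfl fun k hk => by simp [hk]
        _ ≤ S := Summable.sum_le_tsum _ (fun k _ => norm_nonneg _) hf2
        _ ≤ (⌈S⌉₊ : ℝ) + 1 := by
            have := Nat.le_ceil S; linarith
    · exact Finset.sum_congr rfl fun k hk => by simp [hk]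
  obtain ⟨n, x0, hx0⟩ : ∃ n x0, x0 ∈ interior (F n) := by
    obtain ⟨n, hn⟩ := nonempty_interior_of_iUnion_of_closed (fun n => isClosed_closure) hcover
    exact ⟨n, hn⟩
  obtain ⟨r, hr, hball⟩ := Metric.isOpen_iff.1 isOpen_interior x0 hx0
  have hballF : Metric.ball x0 r ⊆ F n := hball.trans interior_subset
  -- ball 0 r ⊆ F n by convexity and symmetry
  have hsym : ∀ y ∈ F n, -y ∈ F n := fun y hy => FinRep.neg_mem_closure hy
  have hconv : Convex ℝ (F n) := (FinRep.convex X ∅ _).closure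
  have h0r : Metric.ball (0 : E) r ⊆ F n := by
    intro z hz
    have hz' : ‖z‖ < r := by simpa [Metric.mem_ball, dist_zero_right] using hz
    have h1 : x0 + z ∈ F n := hballF (by
      simpa [Metric.mem_ball, dist_eq_norm, add_sub_cancel_left] using hz')
    have h2 : x0 - z ∈ F n := hballF (by
      simpa [Metric.mem_ball, dist_eq_norm, norm_sub_rev, sub_sub_cancel] using hz')
    have h3 : -(x0 - z) ∈ F n := hsym _ h2
    have h4 : (1/2 : ℝ) • (x0 + z) + (1/2 : ℝ) • (-(x0 - z)) ∈ F n :=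
      hconv h1 h3 (by norm_num) (by norm_num) (by norm_num)
    rwa [show (1/2 : ℝ) • (x0 + z) + (1/2 : ℝ) • (-(x0 - z)) = z by module] at h4
  refine ⟨r / (n + 1), by positivity, fun z hz => ?_⟩
  have hz' : ‖z‖ < r / (n + 1) := by simpa [Metric.mem_ball, dist_zero_right] using hz
  have h1 : ((n : ℝ) + 1) • z ∈ F n := by
    apply h0r
    have : ‖((n : ℝ) + 1) • z‖ < r := by
      rw [norm_smul, Real.norm_eq_abs, abs_of_pos (by positivity)]
      calc ((n : ℝ) + 1) * ‖z‖ < ((n : ℝ) + 1) * (r / (n + 1)) := by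
            exact mul_lt_mul_of_pos_left hz' (by positivity)
        _ = r := by field_simp
    simpa [Metric.mem_ball, dist_zero_right] using this
  have h2 := FinRep.smul_mem_closure (t := ((n : ℝ) + 1)⁻¹) (by positivity) h1
  have h3 : (((n : ℝ) + 1)⁻¹ * ((n : ℝ) + 1) : ℝ) = 1 := by
    field_simp
  rw [smul_smul, h3, one_smul] at h2
  exact h2


-- dual bound lemma
lemma opNorm_le_of_finRep (X : ℕ → Submodule ℝ E) {δ : ℝ} (hδ : 0 < δ)
    (hb : Metric.ball (0 : E) δ ⊆ closure (FinRep X ∅ 1))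
    (φ : E →L[ℝ] ℝ) (c : ℝ) (hc : 0 ≤ c)
    (h : ∀ k, ∀ v ∈ X k, |φ v| ≤ c * ‖v‖) : ‖φ‖ ≤ 2 / δ * c := by
  have hrep : ∀ y ∈ FinRep X ∅ 1, |φ y| ≤ c := by
    rintro y ⟨s, f, h1, h2, h3, h4, rfl⟩
    calc |φ (∑ k ∈ s, f k)| = |∑ k ∈ s, φ (f k)| := by rw [map_sum]
      _ ≤ ∑ k ∈ s, |φ (f k)| := Finset.abs_sum_le_sum_abs _ _
      _ ≤ ∑ k ∈ s, c * ‖f k‖ := Finset.sum_le_sum fun k _ => h k _ (h1 k)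
      _ = c * ∑ k ∈ s, ‖f k‖ := by rw [Finset.mul_sum]
      _ ≤ c * 1 := mul_le_mul_of_nonneg_left h4 hc
      _ = c := mul_one c
  have hcl : ∀ y ∈ closure (FinRep X ∅ 1), |φ y| ≤ c := by
    intro y hy
    have : closure (FinRep X ∅ 1) ⊆ {y | |φ y| ≤ c} :=
      closure_minimal hrep (isClosed_le (φ.continuous.abs) continuous_const)
    exact this hy
  refine φ.opNorm_le_bound (by positivity) fun x => ?_
  rcases eq_or_ne x 0 with rfl | hx
  · simp
  · have hxn : 0 < ‖x‖ := norm_pos_iff.2 hx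
    have hw : (δ / (2 * ‖x‖)) • x ∈ Metric.ball (0 : E) δ := by
      have : ‖(δ / (2 * ‖x‖)) • x‖ = δ / 2 := by
        rw [norm_smul, Real.norm_eq_abs, abs_of_pos (by positivity)]
        field_simp
      simp only [Metric.mem_ball, dist_zero_right, this]
      linarith
    have h1 : |φ ((δ / (2 * ‖x‖)) • x)| ≤ c := hcl _ (hb hw)
    rw [map_smul, smul_eq_mul, abs_mul, abs_of_pos (by positivity : (0:ℝ) < δ / (2 * ‖x‖))] at h1
    rw [Real.norm_eq_abs]
    calc |φ x| = (2 * ‖x‖ / δ) * (δ / (2 * ‖x‖) * |φ x|) := by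
            field_simp
      _ ≤ (2 * ‖x‖ / δ) * c := mul_le_mul_of_nonneg_left h1 (by positivity)
      _ = 2 / δ * c * ‖x‖ := by ring

-- the series representation lemma
lemma rep_of_ball_subset_closure_finRep [CompleteSpace E] {X : ℕ → Submodule ℝ E}
    (hX : ∀ k, IsClosed (X k : Set E))
    {J : Set ℕ} {δ : ℝ} (hδ : 0 < δ)
    (hb : Metric.ball (0 : E) δ ⊆ closure (FinRep X J 1)) (x : E) :
    ∃ f : ℕ → E, (∀ k, f k ∈ X k) ∧ (∀ k ∈ J, f k = 0) ∧ (Summable fun k => ‖f k‖) ∧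
      Tendsto (fun n => ∑ k ∈ Finset.range n, f k) atTop (nhds x) := by
  classical
  -- one-step approximation
  have step : ∀ z : E, ∃ y ∈ FinRep X J (2 / δ * ‖z‖), ‖z - y‖ ≤ ‖z‖ / 2 := by
    intro z
    rcases eq_or_ne z 0 with rfl | hz
    · exact ⟨0, FinRep.zero_mem (by simp), by simp⟩
    · have hzn : 0 < ‖z‖ := norm_pos_iff.2 hz
      have hw : (δ / (2 * ‖z‖)) • z ∈ Metric.ball (0 : E) δ := by
        have hnw : ‖(δ / (2 * ‖z‖)) • z‖ = δ / 2 := by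
          rw [norm_smul, Real.norm_eq_abs, abs_of_pos (by positivity)]
          field_simp
        simp only [Metric.mem_ball, dist_zero_right, hnw]
        linarith
      obtain ⟨d, hd, hdist⟩ := Metric.mem_closure_iff.1 (hb hw) (δ / 4) (by positivity)
      set t : ℝ := 2 / δ * ‖z‖ with htdef
      have ht : 0 < t := by positivity
      have htw : t • ((δ / (2 * ‖z‖)) • z) = z := by
        rw [smul_smul]
        have : t * (δ / (2 * ‖z‖)) = 1 := by rw [htdef]; field_simp
        rw [this, one_smul]
      refine ⟨t • d, ?_, ?_⟩
      · have h := FinRep.smul_mem (t := t) ht.le hd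
        rwa [mul_one] at h
      · have hkey : z - t • d = t • ((δ / (2 * ‖z‖)) • z - d) := by
          rw [smul_sub, htw]
        calc ‖z - t • d‖ = t * ‖(δ / (2 * ‖z‖)) • z - d‖ := by
              rw [hkey, norm_smul, Real.norm_eq_abs, abs_of_pos ht]
          _ ≤ t * (δ / 4) := by
              refine mul_le_mul_of_nonneg_left ?_ ht.le
              rw [← dist_eq_norm]
              exact le_of_lt hdist
          _ = ‖z‖ / 2 := by rw [htdef]; field_simp; ring
  choose Y hYmem hYnear using step
  set z : ℕ → E := fun i => (fun w => w - Y w)^[i] x with hzdef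
  have hz_succ : ∀ i, z (i + 1) = z i - Y (z i) := by
    intro i
    simp only [hzdef, Function.iterate_succ_apply']
  have hz_norm : ∀ i, ‖z i‖ ≤ ‖x‖ / 2 ^ i := by
    intro i
    induction i with
    | zero => simp [hzdef]
    | succ i ih =>
      rw [hz_succ]
      calc ‖z i - Y (z i)‖ ≤ ‖z i‖ / 2 := hYnear (z i)
        _ ≤ (‖x‖ / 2 ^ i) / 2 := by linarith
        _ = ‖x‖ / 2 ^ (i + 1) := by ring
  have hmem : ∀ i, Y (z i) ∈ FinRep X J (2 / δ * ‖z i‖) := fun i => hYmem (z i)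
  choose s g hg1 hg2 hg3 hg4 hg5 using hmem
  -- summability of the double norm family
  set B : ℕ → ℝ := fun i => (2 / δ * ‖x‖) * (1 / 2) ^ i with hBdef
  have hBsum : Summable B := (summable_geometric_two).mul_left _
  have hrow : ∀ i, Summable fun k => ‖g i k‖ := fun i =>
    summable_of_ne_finset_zero (s := s i) fun k hk => by rw [hg3 i k hk, norm_zero]
  have hrow_tsum : ∀ i, ∑' k, ‖g i k‖ ≤ B i := by
    intro i
    rw [tsum_eq_sum (s := s i) fun k hk => by rw [hg3 i k hk, norm_zero]]
    calc ∑ k ∈ s i, ‖g i k‖ ≤ 2 / δ * ‖z i‖ := hg4 i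
      _ ≤ 2 / δ * (‖x‖ / 2 ^ i) := by
          refine mul_le_mul_of_nonneg_left (hz_norm i) (by positivity)
      _ = B i := by
          rw [hBdef]
          simp only [one_div, inv_pow]
          ring
  have hN : Summable fun p : ℕ × ℕ => ‖g p.1 p.2‖ := by
    refine (summable_prod_of_nonneg fun p => norm_nonneg _).2 ⟨fun i => hrow i, ?_⟩
    exact Summable.of_nonneg_of_le (fun i => tsum_nonneg fun k => norm_nonneg _) hrow_tsum hBsum
  have hcol : ∀ k, Summable fun i => ‖g i k‖ := by
    intro k
    have := hN.prod_symm.prod_factor k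
    simpa using this
  have hcolE : ∀ k, Summable fun i => g i k := fun k => (hcol k).of_norm
  set f : ℕ → E := fun k => ∑' i, g i k with hfdef
  have hf1 : ∀ k, f k ∈ X k := by
    intro k
    have hsum := (hcolE k).hasSum
    refine (hX k).mem_of_tendsto hsum (Filter.Eventually.of_forall fun t => ?_)
    exact Submodule.sum_mem _ fun i _ => hg1 i k
  have hf2 : ∀ k ∈ J, f k = 0 := by
    intro k hk
    have : ∀ i, g i k = 0 := fun i => hg2 i k hk
    simp only [hfdef]
    rw [tsum_congr this, tsum_zero]
  have hfnorm : ∀ k, ‖f k‖ ≤ ∑' i, ‖g i k‖ := fun k => norm_tsum_le_tsum_norm (hcol k)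
  have hcolsum : Summable fun k => ∑' i, ‖g i k‖ := by
    have := hN.prod_symm.prod
    simpa using this
  have hf3 : Summable fun k => ‖f k‖ :=
    Summable.of_nonneg_of_le (fun k => norm_nonneg _) hfnorm hcolsum
  -- identify the total sum
  have hG : Summable fun p : ℕ × ℕ => g p.1 p.2 := hN.of_norm
  have hcomm : ∑' k, ∑' i, g i k = ∑' i, ∑' k, g i k := Summable.tsum_comm hG
  have hy_eq : ∀ i, ∑' k, g i k = Y (z i) := by
    intro i
    rw [tsum_eq_sum (s := s i) fun k hk => hg3 i k hk]
    exact (hg5 i).symm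
  have htel : ∀ n, ∑ i ∈ Finset.range n, Y (z i) = x - z n := by
    intro n
    induction n with
    | zero => simp [hzdef]
    | succ n ih =>
      rw [Finset.sum_range_succ, ih, hz_succ]
      abel
  have hzlim : Tendsto z atTop (nhds 0) := by
    refine squeeze_zero_norm hz_norm ?_
    have h2 : Tendsto (fun n : ℕ => ‖x‖ * (1 / 2) ^ n) atTop (nhds (‖x‖ * 0)) :=
      (tendsto_pow_atTop_nhds_zero_of_lt_one (by norm_num) (by norm_num)).const_mul _
    simpa [div_eq_mul_inv, inv_pow] using h2
  have hYlim : Tendsto (fun n => ∑ i ∈ Finset.range n, Y (z i)) atTop (nhds x) := by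
    have : Tendsto (fun n => x - z n) atTop (nhds (x - 0)) := tendsto_const_nhds.sub hzlim
    rw [sub_zero] at this
    refine this.congr fun n => (htel n).symm
  have hYsummable : Summable fun i => Y (z i) := by
    have h := hG.prod
    refine h.congr fun i => ?_
    exact hy_eq i
  have hYtsum : ∑' i, Y (z i) = x :=
    tendsto_nhds_unique hYsummable.hasSum.tendsto_sum_nat hYlim
  have hftsum : ∑' k, f k = x := by
    simp only [hfdef]
    rw [hcomm]
    rw [tsum_congr hy_eq]
    exact hYtsum
  have hfsummable : Summable f := hf3.of_norm
  refine ⟨f, hf1, hf2, hf3, ?_⟩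
  have := hfsummable.hasSum.tendsto_sum_nat
  rwa [hftsum] at this


end Aux


/-- Suppose `X*` is `C`-convex and `(X_k)` is an absolutely representing system of
subspaces in `X`.  If `I_1, I_2, …` are subsets of `ℕ` such that each natural number
belongs to at most `m` of them, then for some `j` the system `(X_k)_{k ∉ I_j}` is an
absolutely representing system of subspaces in `X`. -/


theorem arss_remove_subset_of_CConvex_dual {E : Type*} [NormedAddCommGroup E]
    [NormedSpace ℝ E] [CompleteSpace E] (X : ℕ → Submodule ℝ E)
    (hX : ∀ k, IsClosed (X k : Set E)) (hconv : IsCConvex (E →L[ℝ] ℝ))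
    (hS : IsARSS X) (I : ℕ → Set ℕ) (m : ℕ)
    (hm : ∀ n : ℕ, ∀ s : Finset ℕ, (∀ j ∈ s, n ∈ I j) → s.card ≤ m) :
    ∃ j : ℕ, ∀ x : E, ∃ f : ℕ → E, (∀ k, f k ∈ X k) ∧ (∀ k ∈ I j, f k = 0) ∧
      (Summable fun k => ‖f k‖) ∧
      Tendsto (fun n => ∑ k ∈ Finset.range n, f k) atTop (nhds x) := by
  classical
  by_contra hcon
  push_neg at hcon
  -- For each j, no ball around 0 lies inside the closure of representations avoiding I j
  have hno : ∀ j : ℕ, ∀ δ : ℝ, 0 < δ → ∃ w : E, ‖w‖ < δ ∧ w ∉ closure (FinRep X (I j) 1) := by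
    intro j δ hδ
    by_contra hball
    push_neg at hball
    obtain ⟨x, hx⟩ := hcon j
    obtain ⟨f, h1, h2, h3, h4⟩ := rep_of_ball_subset_closure_finRep hX hδ
      (fun w hw => hball w (by simpa [Metric.mem_ball, dist_zero_right] using hw)) x
    exact hx f h1 h2 h3 h4
  -- global Baire constant for the full system
  obtain ⟨δ0, hδ0, hball0⟩ := exists_ball_subset_closure_finRep X hS
  set C : ℝ := 2 / δ0 with hCdef
  have hCpos : 0 < C := by positivity
  -- choose n with large C-convexity constant
  obtain ⟨n, hn⟩ := (hconv.eventually_gt_atTop (C * ((m : ℝ) + 1))).exists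
  -- for each j, a separating functional
  have hsep : ∀ j : ℕ, ∃ φ : E →L[ℝ] ℝ, φ ≠ 0 ∧
      ∀ k, k ∉ I j → ∀ v ∈ X k, |φ v| ≤ (1 / ((n : ℝ) + 1)) * ‖φ‖ * ‖v‖ := by
    intro j
    have hδ' : (0:ℝ) < (1 / ((n : ℝ) + 1)) := by positivity
    obtain ⟨w, hwn, hwcl⟩ := hno j _ hδ'
    obtain ⟨φ, u, hφu, huw⟩ := geometric_hahn_banach_closed_point
      ((FinRep.convex X (I j) 1).closure) isClosed_closure hwcl
    have hu0 : 0 < u := by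
      have h0 : (0:E) ∈ closure (FinRep X (I j) 1) :=
        subset_closure (FinRep.zero_mem zero_le_one)
      have := hφu 0 h0
      simpa using this
    have hφne : φ ≠ 0 := by
      intro h
      rw [h] at huw
      simp at huw
      linarith
    refine ⟨φ, hφne, fun k hk v hv => ?_⟩
    rcases eq_or_ne v 0 with rfl | hv0
    · simp
    · have hvn : 0 < ‖v‖ := norm_pos_iff.2 hv0
      set v' : E := ‖v‖⁻¹ • v with hv'def
      have hv'X : v' ∈ X k := (X k).smul_mem _ hv
      have hv'n : ‖v'‖ = 1 := by
        rw [hv'def, norm_smul, Real.norm_eq_abs, abs_of_pos (by positivity), inv_mul_cancel₀ hvn.ne']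
      have hv'mem : v' ∈ closure (FinRep X (I j) 1) :=
        subset_closure (FinRep.single_mem hk hv'X hv'n.le)
      have hv'neg : -v' ∈ closure (FinRep X (I j) 1) := FinRep.neg_mem_closure hv'mem
      have habs : |φ v'| ≤ u := by
        rcases abs_cases (φ v') with ⟨he, _⟩ | ⟨he, _⟩
        · rw [he]; exact (hφu v' hv'mem).le
        · rw [he]
          have := hφu (-v') hv'neg
          rw [map_neg] at this
          linarith
      have hu_lt : u < ‖φ‖ * (1 / ((n : ℝ) + 1)) := by
        have h1 : φ w ≤ ‖φ‖ * ‖w‖ := (le_abs_self _).trans (φ.le_opNorm w)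
        have h2 : ‖φ‖ * ‖w‖ ≤ ‖φ‖ * (1 / ((n : ℝ) + 1)) := by
          rcases eq_or_lt_of_le (norm_nonneg φ) with h | h
          · rw [← h]; simp
          · exact le_of_lt (mul_lt_mul_of_pos_left hwn h)
        linarith [huw]
      have : |φ v'| ≤ (1 / ((n : ℝ) + 1)) * ‖φ‖ := by
        calc |φ v'| ≤ u := habs
          _ ≤ ‖φ‖ * (1 / ((n : ℝ) + 1)) := hu_lt.le
          _ = (1 / ((n : ℝ) + 1)) * ‖φ‖ := by ring
      have hφv : φ v = ‖v‖ * φ v' := by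
        rw [hv'def, map_smul, smul_eq_mul]
        field_simp
      rw [hφv, abs_mul, abs_of_pos hvn]
      calc ‖v‖ * |φ v'| ≤ ‖v‖ * ((1 / ((n : ℝ) + 1)) * ‖φ‖) :=
            mul_le_mul_of_nonneg_left this hvn.le
        _ = (1 / ((n : ℝ) + 1)) * ‖φ‖ * ‖v‖ := by ring
  choose φ hφne hφb using hsep
  -- normalized functionals
  set y : Fin n → (E →L[ℝ] ℝ) := fun j => ‖φ (j : ℕ)‖⁻¹ • φ (j : ℕ) with hydef
  have hφnorm : ∀ j : ℕ, 0 < ‖φ j‖ := fun j => norm_pos_iff.2 (hφne j)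
  have hynorm : ∀ j : Fin n, ‖y j‖ = 1 := by
    intro j
    show ‖‖φ (j : ℕ)‖⁻¹ • φ (j : ℕ)‖ = 1
    rw [norm_smul (‖φ (j : ℕ)‖⁻¹) (φ (j : ℕ)), Real.norm_eq_abs,
      abs_of_pos (inv_pos.2 (hφnorm (j : ℕ))), inv_mul_cancel₀ (hφnorm (j : ℕ)).ne']
  -- the signed sums are uniformly bounded
  have hsigned : ∀ α : Fin n → Bool,
      ‖∑ k : Fin n, (if α k then (1:ℝ) else -1) • y k‖ ≤ C * ((m : ℝ) + 1) := by
    intro α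
    set ψ : E →L[ℝ] ℝ := ∑ k : Fin n, (if α k then (1:ℝ) else -1) • y k with hψdef
    refine opNorm_le_of_finRep X hδ0 hball0 ψ ((m : ℝ) + 1) (by positivity) ?_
    intro k v hv
    have happ : ψ v = ∑ j : Fin n, (if α j then (1:ℝ) else -1) * (y j v) := by
      rw [hψdef]
      simp only [ContinuousLinearMap.sum_apply, ContinuousLinearMap.smul_apply, smul_eq_mul]
    have hterm : ∀ j : Fin n, |(if α j then (1:ℝ) else -1) * (y j v)| = |y j v| := by
      intro j
      rcases Bool.eq_false_or_eq_true (α j) with h | h <;> simp [h, abs_mul]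
    have hbound : ∀ j : Fin n,
        |y j v| ≤ if k ∈ I (j : ℕ) then ‖v‖ else (1 / ((n : ℝ) + 1)) * ‖v‖ := by
      intro j
      have hyv : |y j v| = ‖φ (j : ℕ)‖⁻¹ * |φ (j : ℕ) v| := by
        rw [hydef]
        simp only [ContinuousLinearMap.smul_apply, smul_eq_mul, abs_mul, Real.norm_eq_abs]
        rw [abs_of_pos (inv_pos.2 (hφnorm j))]
      by_cases hkI : k ∈ I (j : ℕ)
      · simp only [hkI, if_true]
        rw [hyv]
        have : |φ (j : ℕ) v| ≤ ‖φ (j : ℕ)‖ * ‖v‖ := (φ (j : ℕ)).le_opNorm v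
        calc ‖φ (j : ℕ)‖⁻¹ * |φ (j : ℕ) v| ≤ ‖φ (j : ℕ)‖⁻¹ * (‖φ (j : ℕ)‖ * ‖v‖) :=
              mul_le_mul_of_nonneg_left this (inv_pos.2 (hφnorm j)).le
          _ = ‖v‖ := by
              rw [← mul_assoc, inv_mul_cancel₀ (hφnorm j).ne', one_mul]
      · simp only [hkI, if_false]
        rw [hyv]
        have := hφb (j : ℕ) k hkI v hv
        calc ‖φ (j : ℕ)‖⁻¹ * |φ (j : ℕ) v|
            ≤ ‖φ (j : ℕ)‖⁻¹ * ((1 / ((n : ℝ) + 1)) * ‖φ (j : ℕ)‖ * ‖v‖) :=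
              mul_le_mul_of_nonneg_left this (inv_pos.2 (hφnorm j)).le
          _ = (1 / ((n : ℝ) + 1)) * ‖v‖ := by
              rw [show (1 / ((n : ℝ) + 1)) * ‖φ (j : ℕ)‖ * ‖v‖
                  = ‖φ (j : ℕ)‖ * ((1 / ((n : ℝ) + 1)) * ‖v‖) from by ring,
                ← mul_assoc, inv_mul_cancel₀ (hφnorm (j : ℕ)).ne', one_mul]
    have hsum1 : |ψ v| ≤ ∑ j : Fin n, |y j v| := by
      rw [happ]
      refine (Finset.abs_sum_le_sum_abs _ _).trans ?_
      refine le_of_eq (Finset.sum_congr rfl fun j _ => hterm j)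
    have hsum2 : ∑ j : Fin n, |y j v|
        ≤ ∑ j : Fin n, (if k ∈ I (j : ℕ) then ‖v‖ else (1 / ((n : ℝ) + 1)) * ‖v‖) :=
      Finset.sum_le_sum fun j _ => hbound j
    have hcount : ((Finset.univ.filter (fun j : Fin n => k ∈ I (j : ℕ))).card : ℝ) ≤ (m : ℝ) := by
      have hinj : Set.InjOn (fun j : Fin n => (j : ℕ))
          ↑(Finset.univ.filter (fun j : Fin n => k ∈ I (j : ℕ))) :=
        fun a _ b _ h => Fin.ext h
      have hcard : (Finset.univ.filter (fun j : Fin n => k ∈ I (j : ℕ))).card =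
          ((Finset.univ.filter (fun j : Fin n => k ∈ I (j : ℕ))).image (fun j : Fin n => (j : ℕ))).card :=
        (Finset.card_image_of_injOn hinj).symm
      rw [hcard]
      have := hm k ((Finset.univ.filter (fun j : Fin n => k ∈ I (j : ℕ))).image (fun j : Fin n => (j : ℕ)))
        (by
          intro j hj
          obtain ⟨a, ha, rfl⟩ := Finset.mem_image.1 hj
          exact (Finset.mem_filter.1 ha).2)
      exact_mod_cast this
    have hsum3 : ∑ j : Fin n, (if k ∈ I (j : ℕ) then ‖v‖ else (1 / ((n : ℝ) + 1)) * ‖v‖)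
        ≤ (m : ℝ) * ‖v‖ + ‖v‖ := by
      rw [Finset.sum_ite]
      have hc1 : ∑ _j ∈ Finset.univ.filter (fun j : Fin n => k ∈ I (j : ℕ)), ‖v‖
          ≤ (m : ℝ) * ‖v‖ := by
        rw [Finset.sum_const, nsmul_eq_mul]
        exact mul_le_mul_of_nonneg_right hcount (norm_nonneg v)
      have hc2 : ∑ _j ∈ Finset.univ.filter (fun j : Fin n => ¬ k ∈ I (j : ℕ)),
          (1 / ((n : ℝ) + 1)) * ‖v‖ ≤ ‖v‖ := by
        rw [Finset.sum_const, nsmul_eq_mul]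
        have hcard : ((Finset.univ.filter (fun j : Fin n => ¬ k ∈ I (j : ℕ))).card : ℝ) ≤ (n : ℝ) := by
          exact_mod_cast (Finset.card_filter_le _ _).trans (by simp)
        calc ((Finset.univ.filter (fun j : Fin n => ¬ k ∈ I (j : ℕ))).card : ℝ)
              * ((1 / ((n : ℝ) + 1)) * ‖v‖)
            ≤ (n : ℝ) * ((1 / ((n : ℝ) + 1)) * ‖v‖) := by
              refine mul_le_mul_of_nonneg_right hcard (by positivity)
          _ = ((n : ℝ) / ((n : ℝ) + 1)) * ‖v‖ := by ring
          _ ≤ 1 * ‖v‖ := by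
              refine mul_le_mul_of_nonneg_right ?_ (norm_nonneg v)
              rw [div_le_one (by positivity)]
              linarith
          _ = ‖v‖ := one_mul _
      linarith
    calc |ψ v| ≤ ∑ j : Fin n, |y j v| := hsum1
      _ ≤ _ := hsum2
      _ ≤ (m : ℝ) * ‖v‖ + ‖v‖ := hsum3
      _ = ((m : ℝ) + 1) * ‖v‖ := by ring
  -- Cconst n is at most C * (m+1)
  have hmemset : (⨆ α : Fin n → Bool, ‖∑ k : Fin n, (if α k then (1:ℝ) else -1) • y k‖) ∈
      {M : ℝ | ∃ yy : Fin n → (E →L[ℝ] ℝ), (∀ k, 1 ≤ ‖yy k‖) ∧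
        M = ⨆ α : Fin n → Bool, ‖∑ k : Fin n, (if α k then (1:ℝ) else -1) • yy k‖} :=
    ⟨y, fun k => (hynorm k).ge, rfl⟩
  have hbdd : BddBelow {M : ℝ | ∃ yy : Fin n → (E →L[ℝ] ℝ), (∀ k, 1 ≤ ‖yy k‖) ∧
      M = ⨆ α : Fin n → Bool, ‖∑ k : Fin n, (if α k then (1:ℝ) else -1) • yy k‖} := by
    refine ⟨0, ?_⟩
    rintro M ⟨yy, hyy, rfl⟩
    exact Real.iSup_nonneg fun α => norm_nonneg _
  have hCle : Cconst (E →L[ℝ] ℝ) n ≤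
      ⨆ α : Fin n → Bool, ‖∑ k : Fin n, (if α k then (1:ℝ) else -1) • y k‖ :=
    csInf_le hbdd hmemset
  have hsup_le : (⨆ α : Fin n → Bool, ‖∑ k : Fin n, (if α k then (1:ℝ) else -1) • y k‖)
      ≤ C * ((m : ℝ) + 1) :=
    ciSup_le hsigned
  have : Cconst (E →L[ℝ] ℝ) n ≤ C * ((m : ℝ) + 1) := hCle.trans hsup_le
  rw [hCdef] at this hn
  linarith
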